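/- arXiv:2309.04298 — 5 statements merged into one kernel-verified Lean document; each statement's English description precedes it below -/
import Mathlib

section
/- Let d ≥ 1 and let Σ ∈ ℝ^{d×d} be symmetric positive definite. The following are equivalent: (i) there exist σ² > 0, a permutation π of {1,…,d}, and a matrix B ∈ ℝ^{d×d} that is strictly lower triangular with respect to π, such that Σ = σ² (I_d − B)^{-1} (I_d − B)^{-T}; (ii) there exist σ² > 0 and a permutation π of {1,…,d} such that for every k ∈ {1,…,d}, with p(k) := {π(1),…,π(k−1)}, one has Σ_{π(k),π(k)|p(k)} = σ². -/
open Matrix Finset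

/-- Conditional covariance `Σ_{k,i|S} = Σ_{k,i} - Σ_{k,S} (Σ_{S,S})⁻¹ Σ_{S,i}`. -/
noncomputable def condCov {d : ℕ} (M : Matrix (Fin d) (Fin d) ℝ) (S : Finset (Fin d))
    (k i : Fin d) : ℝ :=
  M k i - ∑ a : S, ∑ b : S, M k a * (Matrix.of fun a b : S => M a b)⁻¹ a b * M b i

/-- `B` is strictly lower triangular with respect to the permutation `π`. -/
def IsStrictLowerWrt {d : ℕ} (B : Matrix (Fin d) (Fin d) ℝ) (π : Equiv.Perm (Fin d)) : Prop :=
  ∀ a b : Fin d, a ≤ b → B (π a) (π b) = 0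

/-!
Reordering the coordinates by `π` reduces everything to `π = id`. Let `R` be the matrix whose
`k`-th row holds the coefficients of the linear regression of coordinate `k` on the coordinates
`< k`, and `T = 1 - R`. The normal equations make `T Σ` upper triangular with diagonal entries
the conditional variances `Σ_{k,k|<k}`; as `T Σ Tᵀ` is also symmetric, it is the diagonal matrix
`D` of these variances. If `D = σ² • 1`, then `Σ = σ² T⁻¹ T⁻ᵀ`. Conversely, if
`Σ = σ² (1 - B)⁻¹ (1 - B)⁻ᵀ`, then `A = T (1 - B)⁻¹` is unit lower triangular with
`σ² A Aᵀ = D`, and the diagonals of `σ² Aᵀ = A⁻¹ D` give `D = σ² • 1`.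
-/

namespace Matrix

theorem BlockTriangular.mul_apply_self {n α R : Type*} [Fintype n] [LinearOrder α]
    [NonUnitalNonAssocSemiring R] {b : n → α} {M N : Matrix n n R} (hM : M.BlockTriangular b)
    (hN : N.BlockTriangular b) (hb : Function.Injective b) (i : n) :
    (M * N) i i = M i i * N i i := by
  rw [mul_apply, Finset.sum_eq_single i]
  · intro j _ hji
    rcases lt_or_gt_of_ne (hb.ne hji) with h | h
    · rw [hM h, zero_mul]
    · rw [hN h, mul_zero]
  · simp

theorem IsUpperTriangular.eq_diagonal_of_isSymm {n R : Type*} [LinearOrder n] [Zero R]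
    {M : Matrix n n R} (hM : M.IsUpperTriangular) (hs : M.IsSymm) : M = diagonal M.diag := by
  ext i j
  rcases lt_trichotomy i j with h | rfl | h
  · rw [← hs.apply, hM h, diagonal_apply_ne _ h.ne]
  · simp
  · rw [hM h, diagonal_apply_ne _ h.ne']

def IsLowerUnitriangular {n R : Type*} [LT n] [Zero R] [One R] (A : Matrix n n R) : Prop :=
  A.IsLowerTriangular ∧ ∀ i, A i i = 1

namespace IsLowerUnitriangular

variable {n R : Type*} [Fintype n] [LinearOrder n] {A B : Matrix n n R}

theorem mul [Semiring R] (hA : A.IsLowerUnitriangular) (hB : B.IsLowerUnitriangular) :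
    (A * B).IsLowerUnitriangular :=
  ⟨hA.1.mul hB.1, fun i => by
    rw [hA.1.mul_apply_self hB.1 OrderDual.toDual.injective, hA.2, hB.2, one_mul]⟩

theorem det_eq_one [CommRing R] (hA : A.IsLowerUnitriangular) : A.det = 1 := by
  simp [det_of_isLowerTriangular A hA.1, hA.2]

theorem isUnit_det [CommRing R] (hA : A.IsLowerUnitriangular) : IsUnit A.det := by
  rw [hA.det_eq_one]
  exact isUnit_one

theorem inv [CommRing R] (hA : A.IsLowerUnitriangular) :
    A⁻¹.IsLowerUnitriangular := by
  have := A.invertibleOfIsUnitDet hA.isUnit_det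
  have hlow : A⁻¹.IsLowerTriangular := blockTriangular_inv_of_blockTriangular hA.1
  refine ⟨hlow, fun i => ?_⟩
  have := congrFun (congrFun (A.mul_nonsing_inv hA.isUnit_det) i) i
  rwa [hA.1.mul_apply_self hlow OrderDual.toDual.injective, hA.2, one_mul, one_apply_eq] at this

theorem eq_of_smul_mul_transpose_eq_diagonal [CommRing R]
    (hA : A.IsLowerUnitriangular) {s : R} {c : n → R} (h : s • (A * Aᵀ) = diagonal c) (i : n) :
    c i = s := by
  have hAt : s • Aᵀ = A⁻¹ * diagonal c := by
    rw [← h, mul_smul_comm, ← Matrix.mul_assoc, nonsing_inv_mul _ hA.isUnit_det,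
      Matrix.one_mul]
  simpa [hA.2, hA.inv.2] using (congrFun (congrFun hAt i) i).symm

end IsLowerUnitriangular

end Matrix

/-- Covariance of the linear structural equation model `X = B X + ε` with `Cov ε = σ2 • 1`. -/
noncomputable def semCov {n R : Type*} [Fintype n] [DecidableEq n] [CommRing R] (σ2 : R)
    (B : Matrix n n R) : Matrix n n R :=
  σ2 • ((1 - B)⁻¹ * (1 - B)⁻¹ᵀ)

theorem semCov_submatrix_equiv {m n R : Type*} [Fintype m] [DecidableEq m] [Fintype n]
    [DecidableEq n] [CommRing R] (σ2 : R) (B : Matrix n n R) (e : m ≃ n) :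
    (semCov σ2 B).submatrix e e = semCov σ2 (B.submatrix e e) := by
  have hsub : (1 - B).submatrix e e = 1 - B.submatrix e e := by
    rw [← submatrix_one_equiv e]
    rfl
  calc (semCov σ2 B).submatrix e e
      = σ2 • ((1 - B)⁻¹.submatrix e e * (1 - B)⁻¹ᵀ.submatrix e e) := by
        rw [semCov, submatrix_mul_equiv]
        rfl
    _ = semCov σ2 (B.submatrix e e) := by
        rw [← transpose_submatrix, ← inv_submatrix_equiv, hsub, semCov]

section ConditionalCovariance

variable {d : ℕ}

theorem condCov_submatrix_equiv (M : Matrix (Fin d) (Fin d) ℝ) (π : Equiv.Perm (Fin d))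
    (S : Finset (Fin d)) (k i : Fin d) :
    condCov (M.submatrix π π) S k i = condCov M (S.image π) (π k) (π i) := by
  let e : S ≃ S.image π := π.subtypeEquiv fun a => π.injective.mem_finset_image.symm
  have hinv : (Matrix.of fun a b : S => M.submatrix π π a b)⁻¹
      = (Matrix.of fun a b : S.image π => M a b)⁻¹.submatrix e e := by
    rw [← inv_submatrix_equiv]
    rfl
  rw [condCov, condCov, hinv]
  congr 1
  exact Fintype.sum_equiv e _ _ fun a => Fintype.sum_equiv e _ _ fun b => rfl

variable {M : Matrix (Fin d) (Fin d) ℝ}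

theorem condCov_eq_zero_of_mem (hM : M.PosDef) (S : Finset (Fin d)) (k : Fin d) {j : Fin d}
    (hj : j ∈ S) : condCov M S k j = 0 := by
  set N := Matrix.of fun a b : S => M a b
  have hN : N⁻¹ * N = 1 :=
    nonsing_inv_mul N ((isUnit_iff_isUnit_det N).mp (hM.submatrix Subtype.val_injective).isUnit)
  have hsum : ∑ a : S, ∑ b : S, M k a * N⁻¹ a b * M b j
      = ∑ a : S, M k a * (N⁻¹ * N) a ⟨j, hj⟩ := by
    simp only [mul_apply, mul_sum, mul_assoc]
    rfl
  rw [condCov, hsum, hN]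
  simp [one_apply]

noncomputable def regCoeff (M : Matrix (Fin d) (Fin d) ℝ) (S : Finset (Fin d)) (k : Fin d) :
    Fin d → ℝ := fun j =>
  if h : j ∈ S then ∑ a : S, M k a * (Matrix.of fun a b : S => M a b)⁻¹ a ⟨j, h⟩ else 0

theorem condCov_eq_sub_sum_regCoeff (S : Finset (Fin d)) (k i : Fin d) :
    condCov M S k i = M k i - ∑ j, regCoeff M S k j * M j i := by
  rw [condCov, ← Finset.sum_subset (subset_univ S) fun j _ hj => by simp [regCoeff, hj],
    ← Finset.sum_coe_sort S, Finset.sum_comm]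
  simp only [regCoeff, coe_mem, dite_true, sum_mul]

noncomputable def regressionMatrix (M : Matrix (Fin d) (Fin d) ℝ) : Matrix (Fin d) (Fin d) ℝ :=
  fun k => regCoeff M (Iio k) k

theorem isStrictLowerWrt_regressionMatrix : IsStrictLowerWrt (regressionMatrix M) 1 :=
  fun a b hab => dif_neg (by simpa using hab)

theorem IsStrictLowerWrt.isLowerUnitriangular_one_sub {B : Matrix (Fin d) (Fin d) ℝ}
    (hB : IsStrictLowerWrt B 1) : (1 - B).IsLowerUnitriangular :=
  ⟨fun i j (h : i < j) => by simp [show B i j = 0 from hB i j h.le, h.ne],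
    fun i => by simp [show B i i = 0 from hB i i le_rfl]⟩

theorem one_sub_regressionMatrix_mul_apply (k i : Fin d) :
    ((1 - regressionMatrix M) * M) k i = condCov M (Iio k) k i := by
  rw [sub_mul, Matrix.one_mul, Matrix.sub_apply, mul_apply, condCov_eq_sub_sum_regCoeff]
  rfl

theorem one_sub_regressionMatrix_mul_mul_transpose (hM : M.PosDef) :
    (1 - regressionMatrix M) * M * (1 - regressionMatrix M)ᵀ
      = diagonal fun k => condCov M (Iio k) k k := by
  set T := 1 - regressionMatrix M
  have hT : T.IsLowerUnitriangular :=
    isStrictLowerWrt_regressionMatrix.isLowerUnitriangular_one_sub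
  have hTM : (T * M).IsUpperTriangular := fun k i (h : i < k) => by
    rw [one_sub_regressionMatrix_mul_apply, condCov_eq_zero_of_mem hM _ _ (mem_Iio.2 h)]
  have hTt : Tᵀ.IsUpperTriangular := hT.1.transpose
  have hsymm : (T * M * Tᵀ).IsSymm := by
    simpa using isHermitian_mul_mul_conjTranspose T hM.isHermitian
  have hup : (T * M * Tᵀ).IsUpperTriangular := hTM.mul hTt
  rw [hup.eq_diagonal_of_isSymm hsymm]
  congr 1
  ext k
  rw [diag_apply, hTM.mul_apply_self hTt Function.injective_id,
    one_sub_regressionMatrix_mul_apply, transpose_apply, hT.2, mul_one]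

theorem condCov_Iio_self_eq_of_eq_semCov (hM : M.PosDef) {σ2 : ℝ} {B : Matrix (Fin d) (Fin d) ℝ}
    (hB : IsStrictLowerWrt B 1) (h : M = semCov σ2 B) (k : Fin d) :
    condCov M (Iio k) k k = σ2 := by
  set T := 1 - regressionMatrix M
  have hA : (T * (1 - B)⁻¹).IsLowerUnitriangular :=
    isStrictLowerWrt_regressionMatrix.isLowerUnitriangular_one_sub.mul
      hB.isLowerUnitriangular_one_sub.inv
  refine hA.eq_of_smul_mul_transpose_eq_diagonal (c := fun k => condCov M (Iio k) k k) ?_ k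
  calc σ2 • (T * (1 - B)⁻¹ * (T * (1 - B)⁻¹)ᵀ) = T * semCov σ2 B * Tᵀ := by
        simp only [semCov, transpose_mul, Matrix.mul_assoc, mul_smul_comm, smul_mul_assoc]
    _ = T * M * Tᵀ := by rw [← h]
    _ = _ := one_sub_regressionMatrix_mul_mul_transpose hM

theorem eq_semCov_regressionMatrix_of_condCov_Iio_self_eq (hM : M.PosDef) {σ2 : ℝ}
    (hc : ∀ k, condCov M (Iio k) k k = σ2) : M = semCov σ2 (regressionMatrix M) := by
  set T := 1 - regressionMatrix M
  have hT : T.IsLowerUnitriangular :=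
    isStrictLowerWrt_regressionMatrix.isLowerUnitriangular_one_sub
  have := T.invertibleOfIsUnitDet hT.isUnit_det
  have hdiag : T * M * Tᵀ = σ2 • 1 := by
    rw [one_sub_regressionMatrix_mul_mul_transpose hM, funext hc, smul_one_eq_diagonal]
  calc M = T⁻¹ * (T * M * Tᵀ) * Tᵀ⁻¹ := by
        rw [Matrix.mul_assoc T, inv_mul_cancel_left_of_invertible,
          mul_inv_cancel_right_of_invertible]
    _ = semCov σ2 (regressionMatrix M) := by
        rw [hdiag, semCov, transpose_nonsing_inv, Matrix.mul_smul, Matrix.mul_one, smul_mul_assoc]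

end ConditionalCovariance

theorem stmt0_general {d : ℕ} (Sig : Matrix (Fin d) (Fin d) ℝ)
    (hpd : Sig.PosDef) :
    (∃ (σ2 : ℝ) (π : Equiv.Perm (Fin d)) (B : Matrix (Fin d) (Fin d) ℝ),
        0 < σ2 ∧ IsStrictLowerWrt B π ∧
        Sig = σ2 • ((1 - B)⁻¹ * (1 - B)⁻¹ᵀ)) ↔
    (∃ (σ2 : ℝ) (π : Equiv.Perm (Fin d)), 0 < σ2 ∧
        ∀ k : Fin d, condCov Sig ((Finset.Iio k).image π) (π k) (π k) = σ2) := by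
  have hpdπ (π : Equiv.Perm (Fin d)) : (Sig.submatrix π π).PosDef := hpd.submatrix π.injective
  constructor
  · rintro ⟨σ2, π, B, hσ, hB, hSig⟩
    refine ⟨σ2, π, hσ, fun k => ?_⟩
    rw [← condCov_submatrix_equiv]
    refine condCov_Iio_self_eq_of_eq_semCov (hpdπ π) (B := B.submatrix π π)
      (fun a b h => hB a b h) ?_ k
    rw [← semCov_submatrix_equiv]
    exact congrArg (·.submatrix π π) hSig
  · rintro ⟨σ2, π, hσ, hc⟩
    set B := regressionMatrix (Sig.submatrix π π)
    refine ⟨σ2, π, B.submatrix π.symm π.symm, hσ,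
      fun a b h => by simpa using isStrictLowerWrt_regressionMatrix a b h, ?_⟩
    have hSigπ := eq_semCov_regressionMatrix_of_condCov_Iio_self_eq (hpdπ π)
      fun k => (condCov_submatrix_equiv Sig π _ k k).trans (hc k)
    show Sig = semCov σ2 _
    simpa [semCov_submatrix_equiv] using congrArg (·.submatrix π.symm π.symm) hSigπ

theorem stmt0 {d : ℕ} (hd : 1 ≤ d) (Sig : Matrix (Fin d) (Fin d) ℝ)
    (hsym : Sig.IsSymm) (hpd : Sig.PosDef) :
    (∃ (σ2 : ℝ) (π : Equiv.Perm (Fin d)) (B : Matrix (Fin d) (Fin d) ℝ),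
        0 < σ2 ∧ IsStrictLowerWrt B π ∧
        Sig = σ2 • ((1 - B)⁻¹ * (1 - B)⁻¹ᵀ)) ↔
    (∃ (σ2 : ℝ) (π : Equiv.Perm (Fin d)), 0 < σ2 ∧
        ∀ k : Fin d, condCov Sig ((Finset.Iio k).image π) (π k) (π k) = σ2) :=
  stmt0_general Sig hpd
end

section
/- Let d ≥ 1, let B ∈ ℝ^{d×d} satisfy B_{a,b} = 0 whenever a ≤ b (strictly lower triangular), let σ² > 0, and set Σ := σ² (I_d − B)^{-1} (I_d − B)^{-T}. Then for every k ∈ {1,…,d}, with S := {1,…,k−1}, one has Σ_{k,k|S} = σ²; in particular Σ_{1,1} = σ². -/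
/-!
With `A := (1 - B)⁻¹`, which is lower unitriangular, `Σ = σ² A Aᵀ` is a Cholesky factorisation.
For a lower-triangular `A` and `S = {i < k}`, the rows of `A` indexed by `S` vanish outside `S`,
so `Σ_{S,S} = σ² N Nᵀ` and `Σ_{S,k} = σ² N u` with `N = A_{S,S}`, `u = A_{k,S}`. The Schur
complement is then `σ² (u ⬝ u + A_kk² - (N u)ᵀ (N Nᵀ)⁻¹ (N u)) = σ² A_kk² = σ²`.
-/

open Matrix Finset

namespace Matrix.IsLowerTriangular

variable {n R K : Type*} [Fintype n] [LinearOrder n] [CommRing R] [Field K]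

theorem mul_apply_self {A B : Matrix n n R} (hA : A.IsLowerTriangular)
    (hB : B.IsLowerTriangular) (i : n) : (A * B) i i = A i i * B i i := by
  rw [mul_apply, Finset.sum_eq_single i]
  · intro m _ hm
    rcases hm.lt_or_gt with h | h
    · rw [hB h, mul_zero]
    · rw [hA h, zero_mul]
  · exact fun h => absurd (mem_univ i) h

theorem inv {A : Matrix n n R} (hA : A.IsLowerTriangular) : A⁻¹.IsLowerTriangular := by
  by_cases h : IsUnit A.det
  · have := A.invertibleOfIsUnitDet h
    exact blockTriangular_inv_of_blockTriangular hA
  · rw [nonsing_inv_apply_not_isUnit A h]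
    exact fun _ _ _ => rfl

theorem det_ne_zero {A : Matrix n n K} (hA : A.IsLowerTriangular) (hdiag : ∀ i, A i i ≠ 0) :
    A.det ≠ 0 := by
  rw [det_of_isLowerTriangular A hA]
  exact prod_ne_zero_iff.mpr fun i _ => hdiag i

theorem inv_apply_self {A : Matrix n n K} (hA : A.IsLowerTriangular) (hdiag : ∀ i, A i i ≠ 0)
    (i : n) : A⁻¹ i i = (A i i)⁻¹ := by
  refine eq_inv_of_mul_eq_one_right ?_
  rw [← hA.mul_apply_self hA.inv, mul_nonsing_inv A (hA.det_ne_zero hdiag).isUnit, one_apply_eq]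

variable [LocallyFiniteOrderBot n] {A : Matrix n n R}

theorem sum_mul_eq_sum_Iio (hA : A.IsLowerTriangular) {a k : n} (hak : a < k) (x : n → R) :
    ∑ m, A a m * x m = ∑ m : Iio k, A a m * x m := by
  rw [sum_coe_sort (Iio k) fun m => A a m * x m]
  refine (sum_subset (subset_univ _) fun m _ hm => ?_).symm
  rw [hA (hak.trans_le (not_lt.mp (mem_Iio.not.mp hm))), zero_mul]

theorem submatrix_mul_transpose_Iio (hA : A.IsLowerTriangular) (k : n) :
    (A * Aᵀ).submatrix ((↑) : Iio k → n) (↑) =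
      A.submatrix (↑) (↑) * (A.submatrix ((↑) : Iio k → n) (↑))ᵀ := by
  ext a b
  exact hA.sum_mul_eq_sum_Iio (mem_Iio.mp a.2) _

theorem mul_transpose_apply_Iio (hA : A.IsLowerTriangular) {k : n} (a : Iio k) :
    (A * Aᵀ) a k = (A.submatrix ((↑) : Iio k → n) ((↑) : Iio k → n) *ᵥ fun m => A k m) a :=
  hA.sum_mul_eq_sum_Iio (mem_Iio.mp a.2) _

theorem mul_transpose_apply_self (hA : A.IsLowerTriangular) (k : n) :
    (A * Aᵀ) k k = ((fun m : Iio k => A k m) ⬝ᵥ fun m => A k m) + A k k * A k k := by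
  classical
  have hIic : ∑ m, A k m * A k m = ∑ m ∈ Iic k, A k m * A k m :=
    (sum_subset (subset_univ _) fun m _ hm => by
      rw [hA (show k < m from not_le.mp fun h => hm (mem_Iic.mpr h)), zero_mul]).symm
  rw [mul_apply]
  simp only [transpose_apply]
  rw [hIic, ← Iio_insert, sum_insert notMem_Iio_self, add_comm, dotProduct,
    sum_coe_sort (Iio k) fun m => A k m * A k m]

end Matrix.IsLowerTriangular

theorem Matrix.mulVec_dotProduct_mul_transpose_inv_mulVec {m R : Type*} [Fintype m]
    [DecidableEq m] [CommRing R] (N : Matrix m m R) (hN : IsUnit N.det) (u : m → R) :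
    (N *ᵥ u) ⬝ᵥ ((N * Nᵀ)⁻¹ *ᵥ (N *ᵥ u)) = u ⬝ᵥ u := by
  have hNT : IsUnit Nᵀ.det := by rwa [det_transpose]
  rw [mul_inv_rev, mulVec_mulVec, Matrix.mul_assoc, nonsing_inv_mul N hN, Matrix.mul_one,
    ← vecMul_transpose N u, ← dotProduct_mulVec, mulVec_mulVec, mul_nonsing_inv _ hNT,
    one_mulVec]

theorem Matrix.smul_inv {m K : Type*} [Fintype m] [DecidableEq m] [Field K]
    (c : K) (M : Matrix m m K) : (c • M)⁻¹ = c⁻¹ • M⁻¹ := by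
  rcases eq_or_ne c 0 with rfl | hc
  · simp
  by_cases hM : IsUnit M.det
  · exact inv_smul' M (Units.mk0 c hc) hM
  · have hcM : ¬IsUnit (c • M).det := by
      rw [det_smul, isUnit_iff_ne_zero, mul_ne_zero_iff, not_and_or]
      exact Or.inr (mt isUnit_iff_ne_zero.mpr hM)
    rw [nonsing_inv_apply_not_isUnit _ hM, nonsing_inv_apply_not_isUnit _ hcM, smul_zero]

section condCov

variable {d : ℕ}

theorem condCov_eq_sub_dotProduct (M : Matrix (Fin d) (Fin d) ℝ) (S : Finset (Fin d))
    (k i : Fin d) :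
    condCov M S k i = M k i - (fun a : S => M k a) ⬝ᵥ
      ((M.submatrix ((↑) : S → Fin d) ((↑) : S → Fin d))⁻¹ *ᵥ fun b : S => M b i) := by
  simp only [condCov, dotProduct, mulVec, mul_sum, mul_assoc]
  rfl

theorem condCov_smul (c : ℝ) (M : Matrix (Fin d) (Fin d) ℝ) (S : Finset (Fin d)) (k i : Fin d) :
    condCov (c • M) S k i = c * condCov M S k i := by
  have hsub : (of fun a b : S => (c • M) a b) = c • of fun a b : S => M a b := rfl
  unfold condCov
  rw [hsub, Matrix.smul_inv]
  simp only [Matrix.smul_apply, smul_eq_mul, mul_sub, mul_sum]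
  congr 1
  refine sum_congr rfl fun a _ => sum_congr rfl fun b _ => ?_
  linear_combination (M k a * (of fun a b : S => M a b)⁻¹ a b * M b i) * mul_self_mul_inv c

theorem condCov_empty (M : Matrix (Fin d) (Fin d) ℝ) (k i : Fin d) : condCov M ∅ k i = M k i := by
  simp [condCov]

theorem condCov_mul_transpose_Iio {A : Matrix (Fin d) (Fin d) ℝ} (hA : A.IsLowerTriangular)
    (hdiag : ∀ i, A i i ≠ 0) (k : Fin d) : condCov (A * Aᵀ) (Iio k) k k = A k k ^ 2 := by
  set N := A.submatrix ((↑) : Iio k → Fin d) ((↑) : Iio k → Fin d)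
  set u : Iio k → ℝ := fun m => A k m
  have hN : IsUnit N.det :=
    (IsLowerTriangular.det_ne_zero (A := N) (fun _ _ h => hA h) fun a => hdiag a).isUnit
  have hcol : (fun a : Iio k => (A * Aᵀ) a k) = N *ᵥ u := funext hA.mul_transpose_apply_Iio
  have hrow : (fun a : Iio k => (A * Aᵀ) k a) = N *ᵥ u := by
    rw [← hcol]
    ext a
    rw [← transpose_apply (A * Aᵀ), transpose_mul, transpose_transpose]
  rw [condCov_eq_sub_dotProduct, hA.submatrix_mul_transpose_Iio, hrow, hcol,
    mulVec_dotProduct_mul_transpose_inv_mulVec N hN, hA.mul_transpose_apply_self]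
  ring

end condCov

theorem stmt1_general {d : ℕ} (hd : 1 ≤ d) (B : Matrix (Fin d) (Fin d) ℝ)
    (hB : ∀ a b : Fin d, a ≤ b → B a b = 0) (σ2 : ℝ)
    (Sig : Matrix (Fin d) (Fin d) ℝ)
    (hSig : Sig = σ2 • ((1 - B)⁻¹ * (1 - B)⁻¹ᵀ)) :
    (∀ k : Fin d, condCov Sig (Finset.Iio k) k k = σ2) ∧
    Sig ⟨0, hd⟩ ⟨0, hd⟩ = σ2 := by
  have hL : (1 - B).IsLowerTriangular := fun i j (hij : i < j) => by
    simp [one_apply, hB i j hij.le, hij.ne]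
  have hLdiag : ∀ i, (1 - B) i i = 1 := fun i => by simp [hB i i le_rfl]
  have hAdiag : ∀ i, (1 - B)⁻¹ i i = 1 := fun i => by
    rw [hL.inv_apply_self (fun j => by simp [hLdiag]) i, hLdiag, inv_one]
  have hcond : ∀ k : Fin d, condCov Sig (Iio k) k k = σ2 := fun k => by
    rw [hSig, condCov_smul, condCov_mul_transpose_Iio hL.inv (fun i => by simp [hAdiag]),
      hAdiag, one_pow, mul_one]
  refine ⟨hcond, ?_⟩
  have hIio : Iio (⟨0, hd⟩ : Fin d) = ∅ := Iio_eq_empty.mpr fun b _ => Nat.zero_le b.val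
  simpa [hIio, condCov_empty] using hcond ⟨0, hd⟩

theorem stmt1 {d : ℕ} (hd : 1 ≤ d) (B : Matrix (Fin d) (Fin d) ℝ)
    (hB : ∀ a b : Fin d, a ≤ b → B a b = 0) (σ2 : ℝ) (hσ2 : 0 < σ2)
    (Sig : Matrix (Fin d) (Fin d) ℝ)
    (hSig : Sig = σ2 • ((1 - B)⁻¹ * (1 - B)⁻¹ᵀ)) :
    (∀ k : Fin d, condCov Sig (Finset.Iio k) k k = σ2) ∧
    Sig ⟨0, hd⟩ ⟨0, hd⟩ = σ2 :=
  stmt1_general hd B hB σ2 Sig hSig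
end

section
/- Let d ≥ 1 and let B₁, B₂ ∈ ℝ^{d×d} be such that each is strictly lower triangular with respect to some permutation of {1,…,d} (i.e., each has acyclic support), and let σ₁², σ₂² > 0. If σ₁² (I_d − B₁)^{-1} (I_d − B₁)^{-T} = σ₂² (I_d − B₂)^{-1} (I_d − B₂)^{-T}, then σ₁² = σ₂² and B₁ = B₂. In other words, a Gaussian linear structural equation model with equal error variances is identified by its covariance matrix: each covariance matrix of the model corresponds to a unique pair (B, σ²). -/
open Matrix Finset

namespace Matrix

variable {ι R : Type*} [DecidableEq ι]

theorem sum_mul_eq_of_col_eq_one [NonAssocSemiring R] {A : Matrix ι ι R} {s : Finset ι} {j : ι}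
    (hj : j ∈ s) (hcol : ∀ i ∈ s, A i j = (1 : Matrix ι ι R) i j) (k : ι) :
    ∑ i ∈ s, A i j * A i k = A j k := by
  rw [Finset.sum_eq_single_of_mem j hj fun i hi hij => by
    rw [hcol i hi, one_apply_ne hij, zero_mul], hcol j hj, one_apply_eq, one_mul]

variable [CommRing R] [LinearOrder R] [IsStrictOrderedRing R]

theorem col_eq_one_of_sum_mul_self_eq_one {A : Matrix ι ι R} {s : Finset ι} {j : ι} (hj : j ∈ s)
    (hjj : A j j = 1) (hsum : ∑ i ∈ s, A i j * A i j = 1) :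
    ∀ i ∈ s, A i j = (1 : Matrix ι ι R) i j := by
  have hrest : ∑ i ∈ s.erase j, A i j * A i j = 0 := by
    have := Finset.add_sum_erase s (fun i => A i j * A i j) hj
    rw [hsum, hjj, one_mul] at this
    linarith
  intro i hi
  obtain rfl | hij := eq_or_ne i j
  · rw [hjj, one_apply_eq]
  · rw [one_apply_ne hij]
    refine mul_self_eq_zero.mp ?_
    exact (Finset.sum_eq_zero_iff_of_nonneg fun x _ => mul_self_nonneg (A x j)).mp hrest i
      (Finset.mem_erase.mpr ⟨hij, hi⟩)

theorem rows_eq_of_partial_gram_eq {α : Type*} [LinearOrder α] {B₁ B₂ : Matrix ι ι R} {f : ι → α}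
    (h₁ : ∀ i j, f i ≤ f j → B₁ i j = 0) (h₂ : ∀ i, B₂ i i = 0) (s : Finset ι)
    (hs : ∀ a b, ∑ i ∈ s, (1 - B₁) i a * (1 - B₁) i b = ∑ i ∈ s, (1 - B₂) i a * (1 - B₂) i b) :
    ∀ i ∈ s, B₁ i = B₂ i := by
  induction s using Finset.strongInduction with
  | H s ih =>
  rcases s.eq_empty_or_nonempty with rfl | hne
  · simp
  obtain ⟨j, hj, hmax⟩ := s.exists_max_image f hne
  have hcol₁ : ∀ i ∈ s, (1 - B₁) i j = (1 : Matrix ι ι R) i j := fun i hi => by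
    rw [Matrix.sub_apply, h₁ i j (hmax i hi), sub_zero]
  have hcol₂ : ∀ i ∈ s, (1 - B₂) i j = (1 : Matrix ι ι R) i j := by
    refine col_eq_one_of_sum_mul_self_eq_one hj
      (by rw [Matrix.sub_apply, h₂, one_apply_eq, sub_zero]) ?_
    rw [← hs, sum_mul_eq_of_col_eq_one hj hcol₁, hcol₁ j hj, one_apply_eq]
  have hrow : ∀ k, (1 - B₁) j k = (1 - B₂) j k := fun k => by
    rw [← sum_mul_eq_of_col_eq_one hj hcol₁, hs, sum_mul_eq_of_col_eq_one hj hcol₂]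
  have hrest := ih (s.erase j) (Finset.erase_ssubset hj) fun a b => by
    have e₁ := Finset.add_sum_erase s (fun i => (1 - B₁) i a * (1 - B₁) i b) hj
    have e₂ := Finset.add_sum_erase s (fun i => (1 - B₂) i a * (1 - B₂) i b) hj
    simp only [hrow] at e₁
    linarith [hs a b]
  intro i hi
  obtain rfl | hij := eq_or_ne i j
  · exact funext fun k => sub_right_injective (hrow k)
  · exact hrest i (Finset.mem_erase.mpr ⟨hij, hi⟩)

theorem eq_of_transpose_one_sub_mul_eq [Fintype ι] {α : Type*} [LinearOrder α]
    {B₁ B₂ : Matrix ι ι R} {f : ι → α}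
    (h₁ : ∀ i j, f i ≤ f j → B₁ i j = 0) (h₂ : ∀ i, B₂ i i = 0)
    (h : (1 - B₁)ᵀ * (1 - B₁) = (1 - B₂)ᵀ * (1 - B₂)) : B₁ = B₂ :=
  funext fun i => rows_eq_of_partial_gram_eq h₁ h₂ univ
    (fun a b => by simpa only [mul_apply, transpose_apply] using congrFun (congrFun h a) b)
    i (mem_univ i)

theorem inv_mul_inv_transpose_inv {ι K : Type*} [Fintype ι] [DecidableEq ι] [Field K]
    {A : Matrix ι ι K} (hA : IsUnit A.det) : (A⁻¹ * A⁻¹ᵀ)⁻¹ = Aᵀ * A := by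
  rw [mul_inv_rev, transpose_nonsing_inv, nonsing_inv_nonsing_inv _ (by rwa [det_transpose]),
    nonsing_inv_nonsing_inv _ hA]

end Matrix

namespace IsStrictLowerWrt

variable {d : ℕ} {B : Matrix (Fin d) (Fin d) ℝ} {π : Equiv.Perm (Fin d)}

theorem apply_eq_zero (h : IsStrictLowerWrt B π) {i j : Fin d} (hij : π.symm i ≤ π.symm j) :
    B i j = 0 := by
  simpa using h _ _ hij

theorem det_one_sub (h : IsStrictLowerWrt B π) : (1 - B).det = 1 := by
  rw [← det_submatrix_equiv_self π, det_of_isLowerTriangular]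
  · exact Finset.prod_eq_one fun i _ => by simp [h i i le_rfl]
  · intro a b hab
    have hab : a < b := OrderDual.toDual_lt_toDual.mp hab
    simp [one_apply_ne (π.injective.ne hab.ne), h a b hab.le]

end IsStrictLowerWrt

theorem stmt5 {d : ℕ} (hd : 1 ≤ d) (B₁ B₂ : Matrix (Fin d) (Fin d) ℝ)
    (hB₁ : ∃ π : Equiv.Perm (Fin d), IsStrictLowerWrt B₁ π)
    (hB₂ : ∃ π : Equiv.Perm (Fin d), IsStrictLowerWrt B₂ π)
    (σ1 σ2 : ℝ) (hσ1 : 0 < σ1) (hσ2 : 0 < σ2)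
    (heq : σ1 • ((1 - B₁)⁻¹ * (1 - B₁)⁻¹ᵀ) = σ2 • ((1 - B₂)⁻¹ * (1 - B₂)⁻¹ᵀ)) :
    σ1 = σ2 ∧ B₁ = B₂ := by
  obtain ⟨π₁, h₁⟩ := hB₁
  obtain ⟨π₂, h₂⟩ := hB₂
  have hdet₁ := h₁.det_one_sub
  have hdet₂ := h₂.det_one_sub
  have hσ : σ1 = σ2 := by
    have hpow := congrArg det heq
    simp only [det_smul, det_mul, det_transpose, det_nonsing_inv, hdet₁, hdet₂, Ring.inverse_one,
      mul_one, Fintype.card_fin] at hpow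
    exact (pow_left_inj₀ hσ1.le hσ2.le (by omega)).mp hpow
  subst hσ
  have hcov := smul_right_injective _ hσ1.ne' heq
  have hgram : (1 - B₁)ᵀ * (1 - B₁) = (1 - B₂)ᵀ * (1 - B₂) := by
    rw [← inv_mul_inv_transpose_inv (hdet₁ ▸ isUnit_one),
      ← inv_mul_inv_transpose_inv (hdet₂ ▸ isUnit_one), hcov]
  exact ⟨rfl, eq_of_transpose_one_sub_mul_eq (fun _ _ => h₁.apply_eq_zero)
    (fun _ => h₂.apply_eq_zero le_rfl) hgram⟩
end

section
/- Let d ≥ 1 and let Σ̂ ∈ ℝ^{d×d} be symmetric positive definite. Over all matrices B ∈ ℝ^{d×d} with B_{a,b} = 0 whenever a ≤ b (strictly lower triangular), the function B ↦ tr((I_d − B)^T (I_d − B) Σ̂) attains its minimum uniquely at the matrix B̂ whose k-th row restricted to S_k := {1,…,k−1} equals (Σ̂_{S_k,S_k})^{-1} Σ̂_{S_k,k} (transposed) for each k, and the minimal value equals Σ_{k=1}^d Σ̂_{k,k|S_k}, the sum of the conditional variances of each coordinate given its predecessors. -/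
open Matrix Finset

/-- The least-squares coefficient matrix: the `k`-th row of `Bhat` restricted to
`{1,…,k-1}` is `(Σ̂_{S_k,S_k})⁻¹ Σ̂_{S_k,k}`, all other entries are zero. -/
noncomputable def Bhat {d : ℕ} (Shat : Matrix (Fin d) (Fin d) ℝ) :
    Matrix (Fin d) (Fin d) ℝ :=
  Matrix.of fun k p : Fin d =>
    if h : p < k then
      ∑ b : (Finset.Iio k),
        (Matrix.of fun a b : (Finset.Iio k) => Shat a b)⁻¹ ⟨p, Finset.mem_Iio.mpr h⟩ b
          * Shat b k
    else 0

/-! The trace of `(1 - B)ᵀ (1 - B) Σ̂` is `∑ₖ rᵀ Σ̂ r` over the rows `r = e_k - b` of `1 - B`,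
where `b` is supported on the predecessors of `k`. The row of `1 - Bhat Σ̂` is the `Σ̂`-orthogonal
residual of `e_k` after projecting onto those coordinates (the normal equations), so by Pythagoras
`rᵀ Σ̂ r = Σ̂_{k,k|S_k} + (b̂ - b)ᵀ Σ̂ (b̂ - b)`, and the last term vanishes only for `b = b̂`. -/

namespace Matrix

theorem one_sub_row {n R : Type*} [DecidableEq n] [Ring R] (B : Matrix n n R) (k : n) :
    (1 - B) k = Pi.single k 1 - B k :=
  funext fun _ => by rw [sub_apply, one_eq_pi_single, Pi.sub_apply]

section Trace

variable {m n R : Type*} [Fintype m] [Fintype n] [CommSemiring R]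

theorem trace_transpose_mul_self_mul (C : Matrix m n R) (S : Matrix n n R) :
    (Cᵀ * C * S).trace = ∑ k, C k ⬝ᵥ S *ᵥ C k := by
  rw [Matrix.mul_assoc, trace_mul_comm]
  refine sum_congr rfl fun k _ => ?_
  rw [diag_apply, mul_apply', dotProduct_mulVec]
  rfl

end Trace

section Quadratic

variable {n R : Type*} [Fintype n] [CommRing R]

theorem IsSymm.dotProduct_mulVec_add_self {S : Matrix n n R} (hS : S.IsSymm) {u w : n → R}
    (h : w ⬝ᵥ S *ᵥ u = 0) :
    (u + w) ⬝ᵥ S *ᵥ (u + w) = u ⬝ᵥ S *ᵥ u + w ⬝ᵥ S *ᵥ w := by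
  have h' : u ⬝ᵥ S *ᵥ w = 0 := by
    rwa [dotProduct_mulVec, ← mulVec_transpose, hS.eq, dotProduct_comm]
  simp only [mulVec_add, dotProduct_add, add_dotProduct, h, h', add_zero, zero_add]

variable [PartialOrder R] [StarRing R] [TrivialStar R]

theorem PosDef.dotProduct_mulVec_self_eq_zero_iff {S : Matrix n n R} (hS : S.PosDef)
    {x : n → R} : x ⬝ᵥ S *ᵥ x = 0 ↔ x = 0 := by
  refine ⟨fun h => by_contra fun hx => ?_, fun h => by simp [h]⟩
  simpa [h] using (hS.dotProduct_mulVec_pos hx).ne'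

variable [IsOrderedRing R]

theorem trace_transpose_mul_self_mul_nonneg {m : Type*} [Fintype m] (C : Matrix m n R)
    {S : Matrix n n R} (hS : S.PosSemidef) : 0 ≤ (Cᵀ * C * S).trace := by
  rw [trace_transpose_mul_self_mul]
  exact sum_nonneg fun k _ => by simpa using hS.dotProduct_mulVec_nonneg (C k)

theorem trace_transpose_mul_self_mul_eq_zero_iff {m : Type*} [Fintype m] {C : Matrix m n R}
    {S : Matrix n n R} (hS : S.PosDef) : (Cᵀ * C * S).trace = 0 ↔ C = 0 := by
  rw [trace_transpose_mul_self_mul, sum_eq_zero_iff_of_nonneg fun k _ => by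
    simpa using hS.posSemidef.dotProduct_mulVec_nonneg (C k)]
  simp only [mem_univ, true_implies, hS.dotProduct_mulVec_self_eq_zero_iff]
  exact ⟨funext, fun h k => congrFun h k⟩

end Quadratic
end Matrix

section Regression

variable {n K : Type*} [DecidableEq n] [Field K]

noncomputable def regressionCoeff (M : Matrix n n K) (S : Finset n) (k : n) : S → K :=
  (M.submatrix ((↑) : S → n) ((↑) : S → n))⁻¹ *ᵥ fun b => M b k

theorem submatrix_mulVec_regressionCoeff [PartialOrder K] [StarRing K] {M : Matrix n n K}
    (hM : M.PosDef) (S : Finset n) (k : n) :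
    M.submatrix ((↑) : S → n) ((↑) : S → n) *ᵥ regressionCoeff M S k = fun s : S => M s k := by
  have hdet : IsUnit (M.submatrix ((↑) : S → n) ((↑) : S → n)).det :=
    (isUnit_iff_isUnit_det _).mp (hM.submatrix Subtype.val_injective).isUnit
  rw [regressionCoeff, mulVec_mulVec, mul_nonsing_inv _ hdet, one_mulVec]

end Regression

section Bhat

variable {d : ℕ}

theorem condCov_self_eq (M : Matrix (Fin d) (Fin d) ℝ) (S : Finset (Fin d)) (k : Fin d) :
    condCov M S k k = M k k - (fun a : S => M k a) ⬝ᵥ regressionCoeff M S k := by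
  simp only [condCov, regressionCoeff, dotProduct, mulVec, mul_sum, mul_assoc]
  rfl

theorem Bhat_apply_of_lt (Shat : Matrix (Fin d) (Fin d) ℝ) {k p : Fin d} (h : p < k) :
    Bhat Shat k p = regressionCoeff Shat (Iio k) k ⟨p, mem_Iio.mpr h⟩ := by
  simp only [Bhat, of_apply, dif_pos h]
  rfl

theorem Bhat_apply_of_le (Shat : Matrix (Fin d) (Fin d) ℝ) {k p : Fin d} (h : k ≤ p) :
    Bhat Shat k p = 0 := by
  simp only [Bhat, of_apply, dif_neg h.not_gt]

theorem dotProduct_Bhat (Shat : Matrix (Fin d) (Fin d) ℝ) (k : Fin d) (v : Fin d → ℝ) :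
    v ⬝ᵥ Bhat Shat k = (fun i : Iio k => v i) ⬝ᵥ regressionCoeff Shat (Iio k) k := by
  rw [dotProduct, dotProduct, ← sum_subset (subset_univ (Iio k)), ← sum_coe_sort]
  · exact sum_congr rfl fun i _ => by rw [Bhat_apply_of_lt Shat (mem_Iio.mp i.2)]
  · intro i _ hi
    rw [Bhat_apply_of_le Shat (not_lt.mp (mt mem_Iio.mpr hi)), mul_zero]

theorem mulVec_one_sub_Bhat_apply (Shat : Matrix (Fin d) (Fin d) ℝ) (k s : Fin d) :
    (Shat *ᵥ (1 - Bhat Shat) k) s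
      = Shat s k - (fun i : Iio k => Shat s i) ⬝ᵥ regressionCoeff Shat (Iio k) k := by
  rw [one_sub_row, mulVec_sub, Pi.sub_apply, mulVec_single_one, mulVec, dotProduct_Bhat]
  rfl

-- The normal equations of the regression of coordinate `k` on its predecessors.
theorem mulVec_one_sub_Bhat_apply_of_lt {Shat : Matrix (Fin d) (Fin d) ℝ} (hpd : Shat.PosDef)
    {k s : Fin d} (hs : s < k) : (Shat *ᵥ (1 - Bhat Shat) k) s = 0 := by
  rw [mulVec_one_sub_Bhat_apply, sub_eq_zero]
  exact (congrFun (submatrix_mulVec_regressionCoeff hpd (Iio k) k) ⟨s, mem_Iio.mpr hs⟩).symm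

theorem dotProduct_mulVec_one_sub_Bhat_eq_zero {Shat : Matrix (Fin d) (Fin d) ℝ}
    (hpd : Shat.PosDef) {k : Fin d} {x : Fin d → ℝ} (hx : ∀ i, k ≤ i → x i = 0) :
    x ⬝ᵥ Shat *ᵥ (1 - Bhat Shat) k = 0 :=
  sum_eq_zero fun i _ => by
    rcases lt_or_ge i k with hi | hi
    · rw [mulVec_one_sub_Bhat_apply_of_lt hpd hi, mul_zero]
    · rw [hx i hi, zero_mul]

theorem dotProduct_mulVec_one_sub_Bhat_row_eq_condCov {Shat : Matrix (Fin d) (Fin d) ℝ}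
    (hpd : Shat.PosDef) (k : Fin d) :
    (1 - Bhat Shat) k ⬝ᵥ Shat *ᵥ (1 - Bhat Shat) k = condCov Shat (Iio k) k k := by
  rw [one_sub_row, sub_dotProduct, ← one_sub_row, single_one_dotProduct,
    mulVec_one_sub_Bhat_apply,
    dotProduct_mulVec_one_sub_Bhat_eq_zero hpd fun i hi => Bhat_apply_of_le Shat hi,
    sub_zero, condCov_self_eq]

theorem dotProduct_mulVec_one_sub_row_eq_Bhat_add {Shat : Matrix (Fin d) (Fin d) ℝ}
    (hpd : Shat.PosDef) {B : Matrix (Fin d) (Fin d) ℝ} (hB : ∀ a b : Fin d, a ≤ b → B a b = 0)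
    (k : Fin d) :
    (1 - B) k ⬝ᵥ Shat *ᵥ (1 - B) k = (1 - Bhat Shat) k ⬝ᵥ Shat *ᵥ (1 - Bhat Shat) k
      + (Bhat Shat - B) k ⬝ᵥ Shat *ᵥ (Bhat Shat - B) k := by
  have hsplit : (1 - B) k = (1 - Bhat Shat) k + (Bhat Shat - B) k := by
    rw [← sub_add_sub_cancel 1 (Bhat Shat) B]
    rfl
  rw [hsplit, (isHermitian_iff_isSymm.mp hpd.isHermitian).dotProduct_mulVec_add_self]
  refine dotProduct_mulVec_one_sub_Bhat_eq_zero hpd fun i hi => ?_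
  rw [Matrix.sub_apply, Bhat_apply_of_le Shat hi, hB k i hi, sub_zero]

theorem trace_one_sub_eq_Bhat_add {Shat : Matrix (Fin d) (Fin d) ℝ} (hpd : Shat.PosDef)
    {B : Matrix (Fin d) (Fin d) ℝ} (hB : ∀ a b : Fin d, a ≤ b → B a b = 0) :
    ((1 - B)ᵀ * (1 - B) * Shat).trace = ((1 - Bhat Shat)ᵀ * (1 - Bhat Shat) * Shat).trace
      + ((Bhat Shat - B)ᵀ * (Bhat Shat - B) * Shat).trace := by
  simp only [trace_transpose_mul_self_mul, ← sum_add_distrib,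
    dotProduct_mulVec_one_sub_row_eq_Bhat_add hpd hB]

end Bhat

theorem stmt12_general {d : ℕ} (Shat : Matrix (Fin d) (Fin d) ℝ)
    (hpd : Shat.PosDef) :
    (∀ B : Matrix (Fin d) (Fin d) ℝ, (∀ a b : Fin d, a ≤ b → B a b = 0) →
      ((1 - Bhat Shat)ᵀ * (1 - Bhat Shat) * Shat).trace ≤ ((1 - B)ᵀ * (1 - B) * Shat).trace) ∧
    (∀ B : Matrix (Fin d) (Fin d) ℝ, (∀ a b : Fin d, a ≤ b → B a b = 0) →
      ((1 - B)ᵀ * (1 - B) * Shat).trace = ((1 - Bhat Shat)ᵀ * (1 - Bhat Shat) * Shat).trace →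
      B = Bhat Shat) ∧
    ((1 - Bhat Shat)ᵀ * (1 - Bhat Shat) * Shat).trace =
      ∑ k : Fin d, condCov Shat (Finset.Iio k) k k := by
  refine ⟨fun B hB => ?_, fun B hB heq => ?_, ?_⟩
  · rw [trace_one_sub_eq_Bhat_add hpd hB]
    exact le_add_of_nonneg_right (trace_transpose_mul_self_mul_nonneg _ hpd.posSemidef)
  · rwa [trace_one_sub_eq_Bhat_add hpd hB, add_eq_left,
      trace_transpose_mul_self_mul_eq_zero_iff hpd, sub_eq_zero, eq_comm] at heq
  · rw [trace_transpose_mul_self_mul]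
    exact sum_congr rfl fun k _ => dotProduct_mulVec_one_sub_Bhat_row_eq_condCov hpd k

theorem stmt12 {d : ℕ} (hd : 1 ≤ d) (Shat : Matrix (Fin d) (Fin d) ℝ)
    (hsym : Shat.IsSymm) (hpd : Shat.PosDef) :
    (∀ B : Matrix (Fin d) (Fin d) ℝ, (∀ a b : Fin d, a ≤ b → B a b = 0) →
      ((1 - Bhat Shat)ᵀ * (1 - Bhat Shat) * Shat).trace ≤ ((1 - B)ᵀ * (1 - B) * Shat).trace) ∧
    (∀ B : Matrix (Fin d) (Fin d) ℝ, (∀ a b : Fin d, a ≤ b → B a b = 0) →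
      ((1 - B)ᵀ * (1 - B) * Shat).trace = ((1 - Bhat Shat)ᵀ * (1 - Bhat Shat) * Shat).trace →
      B = Bhat Shat) ∧
    ((1 - Bhat Shat)ᵀ * (1 - Bhat Shat) * Shat).trace =
      ∑ k : Fin d, condCov Shat (Finset.Iio k) k k :=
  stmt12_general Shat hpd
end

section
/- Let d ≥ 2, fix indices 1 ≤ i < j ≤ d and ψ ∈ ℝ, and consider the map f_ψ from the open set of symmetric positive definite d×d matrices to ℝ^d whose first component is Σ ↦ Σ_{j,i|{1,…,i−1}} − ψ Σ_{1,1} and whose k-th component (k = 2,…,d) is Σ ↦ Σ_{k,k|{1,…,k−1}} − Σ_{1,1}. Then f_ψ is differentiable and its Fréchet derivative at every symmetric positive definite Σ, viewed as a linear map from the space of symmetric d×d matrices to ℝ^d, is surjective (i.e., the Jacobian of f_ψ has full rank d). -/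
open Matrix Finset

attribute [local instance] Matrix.normedAddCommGroup Matrix.normedSpace

/-- The defining map `f_ψ` of the hypothesis `M_ψ(G)` for the complete DAG with
ordering `(1, …, d)`: first component `Σ_{j,i|{1,…,i-1}} - ψ Σ_{1,1}`, `k`-th component
(`k = 2, …, d`) `Σ_{k,k|{1,…,k-1}} - Σ_{1,1}`. -/
noncomputable def fpsi {n : ℕ} (i j : Fin (n + 2)) (ψ : ℝ)
    (Sig : Matrix (Fin (n + 2)) (Fin (n + 2)) ℝ) : Fin (n + 2) → ℝ :=
  fun k =>
    if k = 0 then condCov Sig (Finset.Iio i) j i - ψ * Sig 0 0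
    else condCov Sig (Finset.Iio k) k k - Sig 0 0

/-!
Along a line `Σ + t H` whose direction `H` vanishes on the entries `Σ_{S,S}`, `Σ_{k,S}` and
`Σ_{S,i}` of the conditioning, `Σ_{k,i|S}` is affine in `t` with slope `H_{k,i}`. Hence the
derivatives of the components of `f_ψ` (indexed from `0` here) in the directions `E_{ji} + E_{ij}`
and `E_{kk}`, `k ≠ 0`, can be read off entrywise, and once component `0` is ranked just before
component `j`, the matrix they form is lower triangular with unit diagonal. Its invertibility
yields symmetric preimages of every vector. Differentiability holds because the conditioning
blocks of a positive definite matrix are invertible, so the entries of their inverses are rational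
in those of `Σ`.
-/

open OrderDual (toDual)

section MatrixCalculus

variable {E ι : Type*} [NormedAddCommGroup E] [NormedSpace ℝ E] [Fintype ι] [DecidableEq ι]
  {A : E → Matrix ι ι ℝ} {x : E}

theorem DifferentiableAt.matrix_det (hA : ∀ p q, DifferentiableAt ℝ (fun y => A y p q) x) :
    DifferentiableAt ℝ (fun y => (A y).det) x := by
  simp only [det_apply]
  fun_prop

theorem DifferentiableAt.matrix_inv_apply (hA : ∀ p q, DifferentiableAt ℝ (fun y => A y p q) x)
    (hdet : (A x).det ≠ 0) (p q : ι) : DifferentiableAt ℝ (fun y => (A y)⁻¹ p q) x := by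
  simp only [Matrix.inv_def, Ring.inverse_eq_inv', Matrix.smul_apply, smul_eq_mul, adjugate_apply]
  refine ((DifferentiableAt.matrix_det hA).inv hdet).mul (DifferentiableAt.matrix_det fun r s => ?_)
  by_cases hr : r = q
  · simp [hr]
  · simpa [hr] using hA r s

theorem DifferentiableAt.fderiv_apply_of_add_smul_eq {f : E → ℝ} {v : E} {r : ℝ}
    (hf : DifferentiableAt ℝ f x) (hline : ∀ t : ℝ, f (x + t • v) = f x + t * r) :
    fderiv ℝ f x v = r := by
  rw [← hf.lineDeriv_eq_fderiv, lineDeriv, funext hline]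
  simp

end MatrixCalculus

theorem Matrix.BlockTriangular.det_of_injective {m R α : Type*} [Fintype m] [DecidableEq m]
    [CommRing R] [LinearOrder α] {M : Matrix m m R} {b : m → α} (hM : M.BlockTriangular b)
    (hb : Function.Injective b) : M.det = ∏ k, M k k := by
  classical
  rw [hM.det, prod_image hb.injOn]
  refine prod_congr rfl fun k _ => ?_
  let _ : Unique {a // b a = b k} := ⟨⟨⟨k, rfl⟩⟩, fun a => Subtype.ext (hb a.2)⟩
  exact (det_unique (M.toSquareBlock b (b k))).trans rfl

section ConditionalCovariance

variable {d : ℕ}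

theorem condCov_add_smul (M H : Matrix (Fin d) (Fin d) ℝ) {S : Finset (Fin d)} {k i : Fin d}
    (hrow : ∀ a ∈ S, H k a = 0) (hcol : ∀ b ∈ S, H b i = 0)
    (hblock : ∀ a ∈ S, ∀ b ∈ S, H a b = 0) (t : ℝ) :
    condCov (M + t • H) S k i = condCov M S k i + t * H k i := by
  have hsub : (of fun a b : S => (M + t • H) a b) = of fun a b : S => M a b := by
    ext a b
    simp [hblock a a.2 b b.2]
  simp only [condCov, hsub]
  simp [hrow, hcol]
  ring

theorem differentiableAt_condCov {Sig : Matrix (Fin d) (Fin d) ℝ} {S : Finset (Fin d)}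
    (hS : (of fun a b : S => Sig a b).det ≠ 0) (k i : Fin d) :
    DifferentiableAt ℝ (fun M => condCov M S k i) Sig := by
  have hentry : ∀ p q : Fin d, Differentiable ℝ (fun M : Matrix (Fin d) (Fin d) ℝ => M p q) :=
    fun p q => by fun_prop
  have hinv := DifferentiableAt.matrix_inv_apply (A := fun M : Matrix (Fin d) (Fin d) ℝ =>
    of fun a b : S => M a b) (fun p q => hentry p q Sig) hS
  unfold condCov
  refine (hentry k i Sig).sub (.fun_sum fun a _ => .fun_sum fun b _ => ?_)
  exact ((hentry k a Sig).mul (hinv a b)).mul (hentry b i Sig)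

theorem Matrix.PosDef.det_principal_ne_zero {Sig : Matrix (Fin d) (Fin d) ℝ} (hpd : Sig.PosDef)
    (S : Finset (Fin d)) : (of fun a b : S => Sig a b).det ≠ 0 :=
  (hpd.submatrix Subtype.val_injective).det_pos.ne'

end ConditionalCovariance

section Fpsi

variable {n : ℕ} {i j : Fin (n + 2)} {ψ : ℝ} {Sig : Matrix (Fin (n + 2)) (Fin (n + 2)) ℝ}

theorem differentiableAt_fpsi_apply (hpd : Sig.PosDef) (m : Fin (n + 2)) :
    DifferentiableAt ℝ (fun M => fpsi i j ψ M m) Sig := by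
  have hentry :
      DifferentiableAt ℝ (fun M : Matrix (Fin (n + 2)) (Fin (n + 2)) ℝ => M 0 0) Sig := by
    fun_prop
  by_cases hm : m = 0
  · simp only [fpsi, hm, if_true]
    exact (differentiableAt_condCov (hpd.det_principal_ne_zero _) j i).sub (hentry.const_mul ψ)
  · simp only [fpsi, hm, if_false]
    exact (differentiableAt_condCov (hpd.det_principal_ne_zero _) m m).sub hentry

theorem differentiableAt_fpsi (hpd : Sig.PosDef) : DifferentiableAt ℝ (fpsi i j ψ) Sig :=
  differentiableAt_pi.mpr (differentiableAt_fpsi_apply hpd)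

theorem fderiv_fpsi_apply (hpd : Sig.PosDef) (H : Matrix (Fin (n + 2)) (Fin (n + 2)) ℝ)
    (m : Fin (n + 2)) :
    fderiv ℝ (fpsi i j ψ) Sig H m = fderiv ℝ (fun M => fpsi i j ψ M m) Sig H :=
  (congrArg (fun L => L H) (fderiv_apply (differentiableAt_fpsi hpd) m)).symm

theorem fderiv_fpsi_zero_apply (hpd : Sig.PosDef) {H : Matrix (Fin (n + 2)) (Fin (n + 2)) ℝ}
    (hrow : ∀ a < i, H j a = 0) (hcol : ∀ b < i, H b i = 0)
    (hblock : ∀ a < i, ∀ b < i, H a b = 0) :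
    fderiv ℝ (fun M => fpsi i j ψ M 0) Sig H = H j i - ψ * H 0 0 := by
  refine (differentiableAt_fpsi_apply hpd 0).fderiv_apply_of_add_smul_eq fun t => ?_
  have hline := condCov_add_smul Sig H (S := Iio i) (fun a ha => hrow a (mem_Iio.mp ha))
    (fun b hb => hcol b (mem_Iio.mp hb))
    (fun a ha b hb => hblock a (mem_Iio.mp ha) b (mem_Iio.mp hb)) t
  simp only [fpsi, if_true, hline, Matrix.add_apply, Matrix.smul_apply, smul_eq_mul]
  ring

theorem fderiv_fpsi_apply_of_ne_zero (hpd : Sig.PosDef) {H : Matrix (Fin (n + 2)) (Fin (n + 2)) ℝ}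
    {m : Fin (n + 2)} (hm : m ≠ 0) (hrow : ∀ a < m, H m a = 0) (hcol : ∀ b < m, H b m = 0)
    (hblock : ∀ a < m, ∀ b < m, H a b = 0) :
    fderiv ℝ (fun M => fpsi i j ψ M m) Sig H = H m m - H 0 0 := by
  refine (differentiableAt_fpsi_apply hpd m).fderiv_apply_of_add_smul_eq fun t => ?_
  have hline := condCov_add_smul Sig H (S := Iio m) (fun a ha => hrow a (mem_Iio.mp ha))
    (fun b hb => hcol b (mem_Iio.mp hb))
    (fun a ha b hb => hblock a (mem_Iio.mp ha) b (mem_Iio.mp hb)) t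
  simp only [fpsi, hm, if_false, hline, Matrix.add_apply, Matrix.smul_apply, smul_eq_mul]
  ring

end Fpsi

section Jacobian

variable {n : ℕ} (i j : Fin (n + 2)) (ψ : ℝ) (Sig : Matrix (Fin (n + 2)) (Fin (n + 2)) ℝ)

noncomputable def fpsiDirection (k : Fin (n + 2)) : Matrix (Fin (n + 2)) (Fin (n + 2)) ℝ :=
  if k = 0 then single j i 1 + single i j 1 else single k k 1

noncomputable def fpsiJacobian : Matrix (Fin (n + 2)) (Fin (n + 2)) ℝ :=
  of fun m k => fderiv ℝ (fun M => fpsi i j ψ M m) Sig (fpsiDirection i j k)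

def fpsiRank (k : Fin (n + 2)) : ℕ :=
  if k = 0 then j else if k < j then k else k + 1

variable {i j ψ Sig}

theorem isSymm_fpsiDirection (k : Fin (n + 2)) : (fpsiDirection i j k).IsSymm := by
  unfold fpsiDirection
  split_ifs
  · simp [IsSymm, transpose_single, add_comm]
  · simp [IsSymm, transpose_single]

theorem fpsiRank_injective : Function.Injective (fpsiRank j) := by
  intro k l h
  simp only [fpsiRank] at h
  split_ifs at h <;> omega

theorem fpsiJacobian_zero_zero (hij : i < j) (hpd : Sig.PosDef) :
    fpsiJacobian i j ψ Sig 0 0 = 1 := by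
  simp only [fpsiJacobian, fpsiDirection, of_apply, if_true]
  rw [fderiv_fpsi_zero_apply hpd] <;> intros <;>
    simp only [Matrix.add_apply, single_apply, and_self, if_true, Fin.ext_iff, Fin.val_zero]
      at * <;>
    split_ifs <;> first | omega | simp

theorem fpsiJacobian_zero_apply_of_le (hij : i < j) (hpd : Sig.PosDef) {k : Fin (n + 2)}
    (hk : k ≠ 0) (hik : i ≤ k) : fpsiJacobian i j ψ Sig 0 k = 0 := by
  simp only [fpsiJacobian, fpsiDirection, of_apply, hk, if_false]
  rw [fderiv_fpsi_zero_apply hpd] <;> intros <;>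
    simp only [single_apply, and_self, ne_eq, Fin.ext_iff, Fin.val_zero] at * <;>
    split_ifs <;> first | omega | simp

theorem fpsiJacobian_apply_zero_of_lt (hpd : Sig.PosDef) {m : Fin (n + 2)} (hm : m ≠ 0)
    (hmj : m < j) : fpsiJacobian i j ψ Sig m 0 = 0 := by
  simp only [fpsiJacobian, fpsiDirection, of_apply, if_true]
  rw [fderiv_fpsi_apply_of_ne_zero hpd hm] <;> intros <;>
    simp only [Matrix.add_apply, single_apply, ne_eq, Fin.ext_iff, Fin.val_zero] at * <;>
    split_ifs <;> first | omega | simp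

theorem fpsiJacobian_apply_of_le (hpd : Sig.PosDef) {m k : Fin (n + 2)} (hm : m ≠ 0)
    (hk : k ≠ 0) (hmk : m ≤ k) : fpsiJacobian i j ψ Sig m k = if m = k then 1 else 0 := by
  simp only [fpsiJacobian, fpsiDirection, of_apply, hk, if_false]
  rw [fderiv_fpsi_apply_of_ne_zero hpd hm] <;> intros <;>
    simp only [single_apply, and_self, ne_eq, Fin.ext_iff, Fin.val_zero] at * <;>
    split_ifs <;> first | omega | simp

theorem fpsiJacobian_blockTriangular (hij : i < j) (hpd : Sig.PosDef) :
    (fpsiJacobian i j ψ Sig).BlockTriangular (toDual ∘ fpsiRank j) := by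
  -- `omega` treats the value of the literal `0 : Fin (n + 2)` as an atom.
  have hval0 : ((0 : Fin (n + 2)) : ℕ) = 0 := Fin.val_zero _
  intro m k hlt
  simp only [Function.comp_apply, OrderDual.toDual_lt_toDual, fpsiRank] at hlt
  by_cases hm : m = 0
  · subst hm
    have hk : k ≠ 0 := by rintro rfl; exact lt_irrefl _ hlt
    exact fpsiJacobian_zero_apply_of_le hij hpd hk (by split_ifs at hlt <;> omega)
  by_cases hk : k = 0
  · subst hk
    exact fpsiJacobian_apply_zero_of_lt hpd hm (by split_ifs at hlt <;> omega)
  rw [fpsiJacobian_apply_of_le hpd hm hk (by split_ifs at hlt <;> omega),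
    if_neg (by rintro rfl; omega)]

theorem det_fpsiJacobian (hij : i < j) (hpd : Sig.PosDef) : (fpsiJacobian i j ψ Sig).det = 1 := by
  rw [(fpsiJacobian_blockTriangular hij hpd).det_of_injective
    (toDual.injective.comp fpsiRank_injective)]
  refine prod_eq_one fun k _ => ?_
  by_cases hk : k = 0
  · subst hk
    exact fpsiJacobian_zero_zero hij hpd
  · simpa using fpsiJacobian_apply_of_le (i := i) (j := j) (ψ := ψ) hpd hk hk le_rfl

theorem fderiv_fpsi_sum_smul_fpsiDirection (hpd : Sig.PosDef) (c : Fin (n + 2) → ℝ) :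
    fderiv ℝ (fpsi i j ψ) Sig (∑ k, c k • fpsiDirection i j k) =
      fpsiJacobian i j ψ Sig *ᵥ c := by
  ext m
  rw [map_sum, Finset.sum_apply, mulVec, dotProduct]
  refine sum_congr rfl fun k _ => ?_
  rw [map_smul, Pi.smul_apply, fderiv_fpsi_apply hpd, smul_eq_mul, mul_comm]
  rfl

end Jacobian

theorem stmt13_general {n : ℕ} (i j : Fin (n + 2)) (hij : i < j) (ψ : ℝ)
    (Sig : Matrix (Fin (n + 2)) (Fin (n + 2)) ℝ) (hpd : Sig.PosDef) :
    DifferentiableAt ℝ (fpsi i j ψ) Sig ∧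
    ∀ y : Fin (n + 2) → ℝ, ∃ H : Matrix (Fin (n + 2)) (Fin (n + 2)) ℝ,
      H.IsSymm ∧ fderiv ℝ (fpsi i j ψ) Sig H = y := by
  refine ⟨differentiableAt_fpsi hpd, fun y => ?_⟩
  have hunit : IsUnit (fpsiJacobian i j ψ Sig) := by
    rw [isUnit_iff_isUnit_det, det_fpsiJacobian hij hpd]
    exact isUnit_one
  obtain ⟨c, hc⟩ := mulVec_surjective_iff_isUnit.mpr hunit y
  refine ⟨∑ k, c k • fpsiDirection i j k, ?_, ?_⟩
  · simp only [IsSymm, transpose_sum, transpose_smul, (isSymm_fpsiDirection _).eq]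
  · rw [fderiv_fpsi_sum_smul_fpsiDirection hpd, hc]

theorem stmt13 {n : ℕ} (i j : Fin (n + 2)) (hij : i < j) (ψ : ℝ)
    (Sig : Matrix (Fin (n + 2)) (Fin (n + 2)) ℝ) (hsym : Sig.IsSymm) (hpd : Sig.PosDef) :
    DifferentiableAt ℝ (fpsi i j ψ) Sig ∧
    ∀ y : Fin (n + 2) → ℝ, ∃ H : Matrix (Fin (n + 2)) (Fin (n + 2)) ℝ,
      H.IsSymm ∧ fderiv ℝ (fpsi i j ψ) Sig H = y :=
  stmt13_general i j hij ψ Sig hpd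
end
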